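/- Let α be irrational with continued-fraction denominators q_k, let f : ℝ → ℝ be 1-periodic with 𝒱(f) < ∞ and log F ∈ L¹[0,1) where F(x) := 1 + |f(x)|, and let ε > 0 and β > 0. Suppose q_{n_j} is a subsequence of the denominators such that Σ_{j=1}^{∞} ∫_{{x ∈ [0,1) : F(x) > e^{ε q_{n_j}/10}}} log F(x) dx < ∞ and q_{n_j + 1} ≥ e^{β q_{n_j}} for all j. Then there exists a full-measure subset X_rep ⊆ [0,1) such that for every x ∈ X_rep, the potential V(n) = f(x + nα) has (β−ε)-repetitions along {q_{n_j}}. -/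

import Mathlib

open MeasureTheory Filter
open scoped ENNReal NNReal

noncomputable section

/-- The truncation `[f]_B` of a real-valued function: `[f]_B x = f x` if `|f x| ≤ B`,
and `B` otherwise. -/
def trunc (f : ℝ → ℝ) (B : ℝ) : ℝ → ℝ := fun x => if |f x| ≤ B then f x else B

/-- The total variation of a `1`-periodic function over the period `[0,1]`. -/
def pVar (f : ℝ → ℝ) : ℝ≥0∞ := eVariationOn f (Set.Icc 0 1)

/-- The semi-bounded variation `𝒱(f) = sup_{B ≥ 1} (1/B) Var [f]_B`. -/
def sVar (f : ℝ → ℝ) : ℝ≥0∞ :=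
  ⨆ B : {B : ℝ // 1 ≤ B}, (ENNReal.ofReal B.1)⁻¹ * pVar (trunc f B.1)

/-- Iterates of the Gauss map, starting from the fractional part of `α`. -/
def gaussIter (α : ℝ) : ℕ → ℝ
  | 0 => Int.fract α
  | (k+1) => Int.fract (gaussIter α k)⁻¹

/-- The continued fraction digit `a_{k+1}` of `α`. -/
def cfA (α : ℝ) (k : ℕ) : ℕ := ⌊(gaussIter α k)⁻¹⌋₊

/-- The denominators `q_k` of the continued fraction approximants of `α`:
`q₀ = 1`, `q₁ = a₁`, `q_{k+1} = a_{k+1} q_k + q_{k-1}`. -/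
def cfDen (α : ℝ) : ℕ → ℕ
  | 0 => 1
  | 1 => cfA α 0
  | (k+2) => cfA α (k+1) * cfDen α (k+1) + cfDen α k

section NT
variable {α : ℝ}

theorem gaussIter_irrational (hα : Irrational α) : ∀ k, Irrational (gaussIter α k) := by
  intro k
  induction k with
  | zero =>
    have : Int.fract α = α - ⌊α⌋ := rfl
    rw [gaussIter, this]; exact hα.sub_intCast _
  | succ k h =>
    have : Int.fract (gaussIter α k)⁻¹ = (gaussIter α k)⁻¹ - ⌊(gaussIter α k)⁻¹⌋ := rfl
    rw [gaussIter, this]; exact h.inv.sub_intCast _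

theorem gaussIter_mem (hα : Irrational α) (k : ℕ) : gaussIter α k ∈ Set.Ioo (0:ℝ) 1 := by
  have hirr := gaussIter_irrational hα k
  have h0 : gaussIter α k ≠ 0 := by
    intro h; rw [h] at hirr; exact (Rat.not_irrational 0) (by simpa using hirr)
  have hfr : ∃ y, gaussIter α k = Int.fract y := by
    cases k with
    | zero => exact ⟨α, rfl⟩
    | succ n => exact ⟨(gaussIter α n)⁻¹, rfl⟩
  obtain ⟨y, hy⟩ := hfr
  refine ⟨lt_of_le_of_ne ?_ (Ne.symm h0), ?_⟩
  · rw [hy]; exact Int.fract_nonneg y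
  · rw [hy]; exact Int.fract_lt_one y

theorem gaussIter_inv_gt_one (hα : Irrational α) (k : ℕ) : 1 < (gaussIter α k)⁻¹ :=
  (one_lt_inv₀ (gaussIter_mem hα k).1).2 (gaussIter_mem hα k).2

theorem cfA_pos (hα : Irrational α) (k : ℕ) : 1 ≤ cfA α k :=
  Nat.le_floor (le_of_lt (by exact_mod_cast gaussIter_inv_gt_one hα k))

/-- Key digit identity: `1 / x_k = a_k + x_{k+1}`. -/
theorem gauss_digit (hα : Irrational α) (k : ℕ) :
    (gaussIter α k)⁻¹ = (cfA α k : ℝ) + gaussIter α (k+1) := by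
  have h1 : (0:ℝ) ≤ (gaussIter α k)⁻¹ := le_of_lt (lt_trans one_pos (gaussIter_inv_gt_one hα k))
  have : (cfA α k : ℝ) = (⌊(gaussIter α k)⁻¹⌋ : ℝ) := by
    rw [cfA]
    rw [← Int.floor_toNat]
    have : (0:ℤ) ≤ ⌊(gaussIter α k)⁻¹⌋ := Int.floor_nonneg.2 h1
    exact_mod_cast Int.toNat_of_nonneg this
  rw [this, gaussIter, Int.fract]; ring

def cfNum (α : ℝ) : ℕ → ℤ
  | 0 => 0
  | 1 => 1
  | (k+2) => cfA α (k+1) * cfNum α (k+1) + cfNum α k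

def gaussProd (α : ℝ) (n : ℕ) : ℝ := ∏ i ∈ Finset.range n, gaussIter α i

theorem gaussProd_pos (hα : Irrational α) (n : ℕ) : 0 < gaussProd α n :=
  Finset.prod_pos fun i _ => (gaussIter_mem hα i).1

theorem gaussProd_succ (n : ℕ) : gaussProd α (n+1) = gaussProd α n * gaussIter α n := by
  rw [gaussProd, Finset.prod_range_succ]; rfl

/-- `(-1)^k (q_k θ - p_k) = x₀ x₁ ⋯ x_k`. -/
theorem cf_key (hα : Irrational α) : ∀ k : ℕ,
    ((-1:ℝ))^k * ((cfDen α k : ℝ) * Int.fract α - (cfNum α k : ℝ)) = gaussProd α (k+1) := by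
  have key : ∀ k : ℕ, gaussIter α k * gaussIter α (k+1) = 1 - (cfA α k : ℝ) * gaussIter α k := by
    intro k
    have hne : gaussIter α k ≠ 0 := ne_of_gt (gaussIter_mem hα k).1
    have h1 : gaussIter α k * ((cfA α k : ℝ) + gaussIter α (k+1)) = 1 := by
      rw [← gauss_digit hα k]; exact mul_inv_cancel₀ hne
    linear_combination h1
  intro k
  induction k using Nat.twoStepInduction with
  | zero =>
    have h0 : gaussProd α 1 = gaussIter α 0 := by
      rw [gaussProd, Finset.prod_range_one]
    have hg0 : Int.fract α = gaussIter α 0 := rfl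
    rw [h0, hg0]
    simp [cfDen, cfNum]
  | one =>
    have h1 : gaussProd α 1 = gaussIter α 0 := by
      rw [gaussProd, Finset.prod_range_one]
    have h2 : gaussProd α 2 = gaussProd α 1 * gaussIter α 1 := gaussProd_succ 1
    have hk : gaussIter α 0 * gaussIter α 1 = 1 - (cfA α 0 : ℝ) * gaussIter α 0 := key 0
    have hg0 : Int.fract α = gaussIter α 0 := rfl
    rw [h2, h1, hg0]
    simp only [cfDen, cfNum, pow_one]
    push_cast
    linear_combination -hk
  | more k ih1 ih2 =>
    have hd : (cfDen α (k+2) : ℝ) = (cfA α (k+1) : ℝ) * cfDen α (k+1) + cfDen α k := by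
      rw [cfDen]; push_cast; ring
    have hn : (cfNum α (k+2) : ℝ) = (cfA α (k+1) : ℝ) * cfNum α (k+1) + cfNum α k := by
      rw [cfNum]; push_cast; ring
    have e1 : gaussProd α (k+3) = gaussProd α (k+2) * gaussIter α (k+2) := gaussProd_succ _
    have e2 : gaussProd α (k+2) = gaussProd α (k+1) * gaussIter α (k+1) := gaussProd_succ _
    have hkey : gaussIter α (k+1) * gaussIter α (k+2)
        = 1 - (cfA α (k+1) : ℝ) * gaussIter α (k+1) := key (k+1)
    have ih2' : ((-1:ℝ))^(k+1) * ((cfDen α (k+1) : ℝ) * Int.fract α - (cfNum α (k+1) : ℝ))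
        = gaussProd α (k+2) := ih2
    have step : ((-1:ℝ))^(k+2) * ((cfDen α (k+2) : ℝ) * Int.fract α - (cfNum α (k+2) : ℝ)) =
        -(cfA α (k+1) : ℝ) * (((-1:ℝ))^(k+1) * ((cfDen α (k+1) : ℝ) * Int.fract α - (cfNum α (k+1) : ℝ)))
        + ((-1:ℝ))^k * ((cfDen α k : ℝ) * Int.fract α - (cfNum α k : ℝ)) := by
      rw [hd, hn]; ring
    rw [step, ih2', ih1, e1, e2]
    linear_combination -gaussProd α (k+1) * hkey
/-- `q_{k+1} D_{k+1} + q_k D_{k+2} = 1`. -/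
theorem cf_sum (hα : Irrational α) : ∀ k : ℕ,
    (cfDen α (k+1) : ℝ) * gaussProd α (k+1) + (cfDen α k : ℝ) * gaussProd α (k+2) = 1 := by
  intro k
  induction k with
  | zero =>
    have h1 : gaussProd α 1 = gaussIter α 0 := by
      rw [gaussProd, Finset.prod_range_one]
    have h2 : gaussProd α 2 = gaussProd α 1 * gaussIter α 1 := gaussProd_succ 1
    have hne : gaussIter α 0 ≠ 0 := ne_of_gt (gaussIter_mem hα 0).1
    have hx : gaussIter α 0 * ((cfA α 0 : ℝ) + gaussIter α 1) = 1 := by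
      rw [← gauss_digit hα 0]; exact mul_inv_cancel₀ hne
    rw [h2, h1]
    simp only [cfDen]
    push_cast
    linear_combination hx
  | succ k ih =>
    have hd : (cfDen α (k+2) : ℝ) = (cfA α (k+1) : ℝ) * cfDen α (k+1) + cfDen α k := by
      rw [cfDen]; push_cast; ring
    have e3 : gaussProd α (k+3) = gaussProd α (k+2) * gaussIter α (k+2) := gaussProd_succ _
    have e2 : gaussProd α (k+2) = gaussProd α (k+1) * gaussIter α (k+1) := gaussProd_succ _
    have hne : gaussIter α (k+1) ≠ 0 := ne_of_gt (gaussIter_mem hα (k+1)).1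
    have hx : gaussIter α (k+1) * ((cfA α (k+1) : ℝ) + gaussIter α (k+2)) = 1 := by
      rw [← gauss_digit hα (k+1)]; exact mul_inv_cancel₀ hne
    show (cfDen α (k+2) : ℝ) * gaussProd α (k+2) + (cfDen α (k+1) : ℝ) * gaussProd α (k+3) = 1
    rw [hd, e3, e2]
    rw [e2] at ih
    linear_combination ih + (cfDen α (k+1) : ℝ) * gaussProd α (k+1) * hx

theorem cfDen_pos (hα : Irrational α) : ∀ k, 1 ≤ cfDen α k := by
  intro k
  induction k using Nat.twoStepInduction with
  | zero => simp [cfDen]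
  | one => simpa [cfDen] using cfA_pos hα 0
  | more k ih1 ih2 =>
    rw [cfDen]
    have := cfA_pos hα (k+1)
    nlinarith

theorem cfDen_ge (hα : Irrational α) : ∀ k, k ≤ cfDen α k := by
  intro k
  induction k using Nat.twoStepInduction with
  | zero => simp
  | one => simpa [cfDen] using cfA_pos hα 0
  | more k ih1 ih2 =>
    rw [cfDen]
    have h1 := cfA_pos hα (k+1)
    have h2 := cfDen_pos hα k
    have h3 := ih2
    nlinarith

/-- The key approximation: `∃ m, |q_k α - m| ≤ 1 / q_{k+1}`. -/
theorem cf_approx (hα : Irrational α) (k : ℕ) : ∃ m : ℤ, |(cfDen α k : ℝ) * α - m| ≤ 1 / (cfDen α (k+1) : ℝ) := by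
  refine ⟨cfNum α k + (cfDen α k : ℤ) * ⌊α⌋, ?_⟩
  have h1 : (cfDen α k : ℝ) * α - (cfNum α k + (cfDen α k : ℤ) * ⌊α⌋ : ℤ) =
      (cfDen α k : ℝ) * Int.fract α - cfNum α k := by
    rw [Int.fract]; push_cast; ring
  rw [h1]
  have h2 := cf_key hα k
  have habs : |(cfDen α k : ℝ) * Int.fract α - cfNum α k| = gaussProd α (k+1) := by
    rcases Nat.even_or_odd k with he | ho
    · rw [he.neg_one_pow, one_mul] at h2
      rw [abs_of_nonneg (h2 ▸ le_of_lt (gaussProd_pos hα (k+1))), h2]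
    · rw [ho.neg_one_pow, neg_one_mul] at h2
      rw [abs_of_nonpos (by nlinarith [gaussProd_pos hα (k+1)]), h2]
  rw [habs]
  have hsum := cf_sum hα k
  have hp2 := gaussProd_pos hα (k+2)
  have hq : (0:ℝ) < (cfDen α (k+1) : ℝ) := by exact_mod_cast cfDen_pos hα (k+1)
  have hqk : (0:ℝ) ≤ (cfDen α k : ℝ) := by positivity
  rw [le_div_iff₀ hq]
  nlinarith [mul_nonneg hqk hp2.le, hsum]

end NT


section BV

/-- A function of bounded variation on `[0,1]` agrees there with a measurable function. -/
theorem exists_measurable_eqOn {g : ℝ → ℝ} (h : BoundedVariationOn g (Set.Icc 0 1)) :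
    ∃ G : ℝ → ℝ, Measurable G ∧ Set.EqOn G g (Set.Icc 0 1) := by
  obtain ⟨p, q, hp, hq, hpq⟩ := h.locallyBoundedVariationOn.exists_monotoneOn_sub_monotoneOn
  set c : ℝ → ℝ := fun x => max 0 (min x 1) with hc
  have hcmono : Monotone c := fun a b hab => max_le_max le_rfl (min_le_min hab le_rfl)
  have hcmem : ∀ x, c x ∈ Set.Icc (0:ℝ) 1 :=
    fun x => ⟨le_max_left _ _, max_le zero_le_one (min_le_right _ _)⟩
  have hceq : ∀ x ∈ Set.Icc (0:ℝ) 1, c x = x := by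
    intro x hx
    simp only [hc, min_eq_left hx.2, max_eq_right hx.1]
  refine ⟨fun x => p (c x) - q (c x), ?_, ?_⟩
  · have h1 : Monotone fun x => p (c x) := fun a b hab => hp (hcmem a) (hcmem b) (hcmono hab)
    have h2 : Monotone fun x => q (c x) := fun a b hab => hq (hcmem a) (hcmem b) (hcmono hab)
    exact h1.measurable.sub h2.measurable
  · intro x hx
    have := congrFun hpq x
    simp only [Pi.sub_apply] at this
    show p (c x) - q (c x) = g x
    rw [hceq x hx, this]

theorem trunc_periodic {f : ℝ → ℝ} (hper : Function.Periodic f 1) (B : ℝ) :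
    Function.Periodic (trunc f B) 1 := by
  intro x; simp only [trunc, hper x]

theorem periodic_int_add {g : ℝ → ℝ} (hper : Function.Periodic g 1) (k : ℤ) (x : ℝ) :
    g (x + k) = g x := by
  simpa using (hper.int_mul k) x

/-- `pVar (trunc f B)` is finite when `sVar f` is. -/
theorem pVar_trunc_ne_top {f : ℝ → ℝ} (hsv : sVar f ≠ ⊤) {B : ℝ} (hB : 1 ≤ B) :
    pVar (trunc f B) ≠ ⊤ := by
  have hle : (ENNReal.ofReal B)⁻¹ * pVar (trunc f B) ≤ sVar f :=
    le_iSup (fun (b : {B : ℝ // 1 ≤ B}) => (ENNReal.ofReal b.1)⁻¹ * pVar (trunc f b.1)) ⟨B, hB⟩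
  intro htop
  rw [htop] at hle
  have h0 : (ENNReal.ofReal B)⁻¹ ≠ 0 := by
    simp [ENNReal.inv_ne_zero]
  rw [ENNReal.mul_top h0] at hle
  exact hsv (top_le_iff.mp hle)

theorem pVar_trunc_le {f : ℝ → ℝ} {B : ℝ} (hB : 1 ≤ B) :
    pVar (trunc f B) ≤ sVar f * ENNReal.ofReal B := by
  have hle : (ENNReal.ofReal B)⁻¹ * pVar (trunc f B) ≤ sVar f :=
    le_iSup (fun (b : {B : ℝ // 1 ≤ B}) => (ENNReal.ofReal b.1)⁻¹ * pVar (trunc f b.1)) ⟨B, hB⟩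
  have hBne : ENNReal.ofReal B ≠ 0 := by
    simp only [ne_eq, ENNReal.ofReal_eq_zero, not_le]; linarith
  have hBne' : ENNReal.ofReal B ≠ ⊤ := ENNReal.ofReal_ne_top
  calc pVar (trunc f B) = ENNReal.ofReal B * ((ENNReal.ofReal B)⁻¹ * pVar (trunc f B)) := by
        rw [← mul_assoc, ENNReal.mul_inv_cancel hBne hBne', one_mul]
    _ ≤ ENNReal.ofReal B * sVar f := by exact mul_le_mul_right hle _
    _ = sVar f * ENNReal.ofReal B := mul_comm _ _

/-- The variation of a `1`-periodic function on `[m, m+1]` (`m : ℤ`) equals that on `[0,1]`. -/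
theorem evar_int_shift {g : ℝ → ℝ} (hper : Function.Periodic g 1) (m : ℤ) :
    eVariationOn g (Set.Icc (m:ℝ) (m+1)) = eVariationOn g (Set.Icc 0 1) := by
  have hφ : MonotoneOn (fun u : ℝ => u + (m:ℝ)) (Set.Icc 0 1) :=
    fun a _ b _ hab => by simpa using hab
  have himg : (fun u : ℝ => u + (m:ℝ)) '' Set.Icc 0 1 = Set.Icc (m:ℝ) (m+1) := by
    rw [Set.image_add_const_Icc, zero_add, add_comm]
  have hcomp : g ∘ (fun u : ℝ => u + (m:ℝ)) = g := by
    funext x; exact periodic_int_add hper m x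
  calc eVariationOn g (Set.Icc (m:ℝ) (m+1)) = eVariationOn g ((fun u : ℝ => u + (m:ℝ)) '' Set.Icc 0 1) := by rw [himg]
    _ = eVariationOn (g ∘ (fun u : ℝ => u + (m:ℝ))) (Set.Icc 0 1) :=
        (eVariationOn.comp_eq_of_monotoneOn g _ hφ).symm
    _ = eVariationOn g (Set.Icc 0 1) := by rw [hcomp]

/-- Variation of a periodic function over `[m, m+N]`. -/
theorem evar_int_window {g : ℝ → ℝ} (hper : Function.Periodic g 1) (m : ℤ) (N : ℕ) :
    eVariationOn g (Set.Icc (m:ℝ) (m+N)) = N * eVariationOn g (Set.Icc 0 1) := by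
  induction N with
  | zero => simp [eVariationOn.subsingleton g (by simp [Set.Icc_self] : (Set.Icc (m:ℝ) (m+(0:ℕ))).Subsingleton)]
  | succ N ih =>
    have h1 : eVariationOn g (Set.Icc (m:ℝ) (m+N)) + eVariationOn g (Set.Icc ((m:ℝ)+N) (m+N+1))
        = eVariationOn g (Set.Icc (m:ℝ) (m+(N+1))) := by
      have := eVariationOn.Icc_add_Icc g (s := Set.univ) (a := (m:ℝ)) (b := (m:ℝ)+N)
        (c := (m:ℝ)+(N+1)) (by simp) (by linarith) (Set.mem_univ _)
      simpa [Set.univ_inter, add_assoc] using this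
    have h2 : eVariationOn g (Set.Icc ((m:ℝ)+N) (m+N+1)) = eVariationOn g (Set.Icc 0 1) := by
      have := evar_int_shift hper (m + N)
      push_cast at this
      convert this using 2 <;> push_cast <;> ring
    have hcast : ((N+1:ℕ):ℝ) = (N:ℝ)+1 := by push_cast; ring
    rw [hcast, ← h1, ih, h2]
    push_cast
    ring

/-- Variation over any window `[y, y+L]` is at most `(⌊L⌋+2) Var`. -/
theorem evar_window_le {g : ℝ → ℝ} (hper : Function.Periodic g 1) (y L : ℝ) (hL : 0 ≤ L) :
    eVariationOn g (Set.Icc y (y+L)) ≤ ((⌊L⌋₊ + 2 : ℕ)) * eVariationOn g (Set.Icc 0 1) := by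
  have hsub : Set.Icc y (y+L) ⊆ Set.Icc ((⌊y⌋:ℝ)) ((⌊y⌋:ℝ) + (⌊L⌋₊ + 2 : ℕ)) := by
    apply Set.Icc_subset_Icc
    · exact Int.floor_le y
    · have h1 : y < ⌊y⌋ + 1 := Int.lt_floor_add_one y
      have h2 : L < ⌊L⌋₊ + 1 := Nat.lt_floor_add_one L
      push_cast
      linarith
  calc eVariationOn g (Set.Icc y (y+L)) ≤ eVariationOn g (Set.Icc ((⌊y⌋:ℝ)) ((⌊y⌋:ℝ) + (⌊L⌋₊ + 2 : ℕ))) :=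
        eVariationOn.mono g hsub
    _ = ((⌊L⌋₊ + 2 : ℕ)) * eVariationOn g (Set.Icc 0 1) := evar_int_window hper ⌊y⌋ _

end BV

section Meas

/-- Shifting a set-lintegral on an interval. -/
theorem lint_Ico_shift (h : ℝ → ℝ≥0∞) (hm : Measurable h) (a b c : ℝ) :
    ∫⁻ y in Set.Ico a b, h (y + c) = ∫⁻ y in Set.Ico (a+c) (b+c), h y := by
  have hmp : MeasurePreserving (fun y : ℝ => y + c) volume volume :=
    measurePreserving_add_right volume c
  have hpre : (fun y : ℝ => y + c) ⁻¹' Set.Ico (a+c) (b+c) = Set.Ico a b := by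
    ext y; simp only [Set.mem_preimage, Set.mem_Ico]; constructor <;> intro ⟨h1, h2⟩ <;>
      constructor <;> linarith
  have := hmp.setLIntegral_comp_preimage (s := Set.Ico (a+c) (b+c)) measurableSet_Ico hm
  rw [hpre] at this
  exact this

theorem periodic_lint_int_add {h : ℝ → ℝ≥0∞} (hp : ∀ y, h (y + 1) = h y) (k : ℤ) (y : ℝ) :
    h (y + k) = h y := by
  induction k using Int.induction_on with
  | zero => simp
  | succ n ih =>
    have e : y + (((n:ℤ) + 1 : ℤ) : ℝ) = (y + ((n:ℤ):ℝ)) + 1 := by push_cast; ring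
    calc h (y + (((n:ℤ)+1:ℤ):ℝ)) = h ((y + ((n:ℤ):ℝ)) + 1) := by rw [e]
      _ = h (y + ((n:ℤ):ℝ)) := hp _
      _ = h y := ih
  | pred n ih =>
    have e : (y + ((-(n:ℤ)-1 : ℤ) : ℝ)) + 1 = y + ((-(n:ℤ) : ℤ) : ℝ) := by push_cast; ring
    calc h (y + ((-(n:ℤ)-1:ℤ):ℝ)) = h ((y + ((-(n:ℤ)-1:ℤ):ℝ)) + 1) := (hp _).symm
      _ = h (y + ((-(n:ℤ):ℤ):ℝ)) := by rw [e]
      _ = h y := ih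

/-- Translation invariance of the `[0,1)`-lintegral of a `1`-periodic function. -/
theorem lint_periodic_shift {h : ℝ → ℝ≥0∞} (hm : Measurable h)
    (hp : ∀ y, h (y + 1) = h y) (c : ℝ) :
    ∫⁻ y in Set.Ico (0:ℝ) 1, h (y + c) = ∫⁻ y in Set.Ico (0:ℝ) 1, h y := by
  set m : ℝ := (⌊c⌋ : ℝ) + 1 with hm'
  have hcm : c ≤ m := by have := Int.lt_floor_add_one c; rw [hm']; linarith
  have hmc : m - 1 ≤ c := by have := Int.floor_le c; rw [hm']; linarith
  have split1 : ∫⁻ y in Set.Ico c (c+1), h y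
      = (∫⁻ y in Set.Ico c m, h y) + ∫⁻ y in Set.Ico m (c+1), h y := by
    rw [← lintegral_union measurableSet_Ico (by rw [Set.disjoint_left]; rintro y ⟨_, h2⟩ ⟨h3, _⟩; exact absurd h3 (not_le.mpr h2)),
      Set.Ico_union_Ico_eq_Ico hcm (by linarith)]
  have step2 : ∫⁻ y in Set.Ico m (c+1), h y = ∫⁻ y in Set.Ico (m-1) c, h y := by
    have := lint_Ico_shift h hm (m-1) c 1
    simp only [sub_add_cancel] at this
    rw [← this]
    exact lintegral_congr fun y => by rw [hp]
  have split2 : (∫⁻ y in Set.Ico (m-1) c, h y) + ∫⁻ y in Set.Ico c m, h y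
      = ∫⁻ y in Set.Ico (m-1) m, h y := by
    rw [← lintegral_union measurableSet_Ico (by rw [Set.disjoint_left]; rintro y ⟨_, h2⟩ ⟨h3, _⟩; exact absurd h3 (not_le.mpr h2)),
      Set.Ico_union_Ico_eq_Ico hmc hcm]
  have last : ∫⁻ y in Set.Ico (m-1) m, h y = ∫⁻ y in Set.Ico (0:ℝ) 1, h y := by
    have := lint_Ico_shift h hm 0 1 (m-1)
    simp only [zero_add] at this
    have h1m : 1 + (m - 1) = m := by ring
    rw [h1m] at this
    rw [← this]
    refine lintegral_congr fun y => ?_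
    have : y + (m - 1) = y + (⌊c⌋ : ℤ) := by rw [hm']; push_cast; ring
    rw [this, periodic_lint_int_add hp]
  calc ∫⁻ y in Set.Ico (0:ℝ) 1, h (y + c)
      = ∫⁻ y in Set.Ico (0+c) (1+c), h y := lint_Ico_shift (h := h) hm 0 1 c
    _ = ∫⁻ y in Set.Ico c (c+1), h y := by rw [zero_add, add_comm 1 c]
    _ = (∫⁻ y in Set.Ico c m, h y) + ∫⁻ y in Set.Ico m (c+1), h y := split1
    _ = (∫⁻ y in Set.Ico (m-1) c, h y) + ∫⁻ y in Set.Ico c m, h y := by rw [step2, add_comm]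
    _ = ∫⁻ y in Set.Ico (m-1) m, h y := split2
    _ = ∫⁻ y in Set.Ico (0:ℝ) 1, h y := last

end Meas

section Key

/-- The main variation-integral estimate: `∫₀¹ |g(y+δ)-g(y)| dy ≤ δ · Var g`. -/
theorem key_integral {g : ℝ → ℝ} (hper : Function.Periodic g 1) (hgm : Measurable g)
    {δ : ℝ} (hδ : 0 ≤ δ) :
    ∫⁻ y in Set.Ico (0:ℝ) 1, ENNReal.ofReal |g (y+δ) - g y| ≤
      ENNReal.ofReal δ * eVariationOn g (Set.Icc 0 1) := by
  set W := eVariationOn g (Set.Icc 0 1) with hW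
  set h : ℝ → ℝ≥0∞ := fun y => ENNReal.ofReal |g (y+δ) - g y| with hh
  have hm : Measurable h :=
    (((hgm.comp (measurable_id.add_const δ)).sub hgm).abs).ennreal_ofReal
  have hp : ∀ y, h (y+1) = h y := by
    intro y
    simp only [hh]
    have e : y + 1 + δ = (y + δ) + 1 := by ring
    rw [e, hper (y + δ), hper y]
  set I := ∫⁻ y in Set.Ico (0:ℝ) 1, h y with hI
  have main : ∀ n : ℕ, (n : ℝ≥0∞) * I ≤ ((⌊(n:ℝ)*δ⌋₊ + 2 : ℕ)) * W := by
    intro n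
    have e1 : (n : ℝ≥0∞) * I = ∑ k ∈ Finset.range n, ∫⁻ y in Set.Ico (0:ℝ) 1, h (y + k*δ) := by
      have hs : ∑ k ∈ Finset.range n, ∫⁻ y in Set.Ico (0:ℝ) 1, h (y + (k:ℝ)*δ)
          = ∑ _k ∈ Finset.range n, I :=
        Finset.sum_congr rfl (fun k _ => lint_periodic_shift hm hp ((k:ℝ)*δ))
      rw [hs, Finset.sum_const, Finset.card_range, nsmul_eq_mul]
    have e2 : ∑ k ∈ Finset.range n, ∫⁻ y in Set.Ico (0:ℝ) 1, h (y + k*δ)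
        = ∫⁻ y in Set.Ico (0:ℝ) 1, ∑ k ∈ Finset.range n, h (y + k*δ) :=
      (lintegral_finset_sum _ fun k _ => hm.comp (measurable_id.add_const _)).symm
    have pb : ∀ y : ℝ, (∑ k ∈ Finset.range n, h (y + k*δ)) ≤ ((⌊(n:ℝ)*δ⌋₊ + 2 : ℕ)) * W := by
      intro y
      have hmono : MonotoneOn (fun k : ℕ => y + k*δ) (Set.Iic n) := by
        intro a _ b _ hab
        have h1 : (a:ℝ) ≤ (b:ℝ) := by exact_mod_cast hab
        have h2 := mul_le_mul_of_nonneg_right h1 hδ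
        simp only []
        linarith
      have hmem : ∀ k ≤ n, y + k*δ ∈ Set.Icc y (y + (n:ℝ)*δ) := by
        intro k hk
        have hkn : (k:ℝ) ≤ (n:ℝ) := by exact_mod_cast hk
        have h1 := mul_nonneg (Nat.cast_nonneg (α := ℝ) k) hδ
        have h2 := mul_le_mul_of_nonneg_right hkn hδ
        exact ⟨by linarith, by linarith⟩
      have hsum := eVariationOn.sum_le_of_monotoneOn_Iic (f := g) hmono hmem
      have heq : ∀ k ∈ Finset.range n,
          h (y + k*δ) = edist (g (y + ((k+1:ℕ):ℝ)*δ)) (g (y + (k:ℝ)*δ)) := by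
        intro k _
        rw [edist_dist, Real.dist_eq]
        have e : y + ((k+1:ℕ):ℝ)*δ = (y + (k:ℝ)*δ) + δ := by push_cast; ring
        rw [e]
      calc (∑ k ∈ Finset.range n, h (y + k*δ))
          = ∑ k ∈ Finset.range n, edist (g (y + ((k+1:ℕ):ℝ)*δ)) (g (y + (k:ℝ)*δ)) :=
            Finset.sum_congr rfl heq
        _ ≤ eVariationOn g (Set.Icc y (y + (n:ℝ)*δ)) := hsum
        _ ≤ ((⌊(n:ℝ)*δ⌋₊ + 2 : ℕ)) * W := evar_window_le hper y ((n:ℝ)*δ) (by positivity)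
    calc (n : ℝ≥0∞) * I = ∫⁻ y in Set.Ico (0:ℝ) 1, ∑ k ∈ Finset.range n, h (y + k*δ) := by
          rw [e1, e2]
      _ ≤ ∫⁻ _ in Set.Ico (0:ℝ) 1, ((⌊(n:ℝ)*δ⌋₊ + 2 : ℕ)) * W := lintegral_mono fun y => pb y
      _ = ((⌊(n:ℝ)*δ⌋₊ + 2 : ℕ)) * W * volume (Set.Ico (0:ℝ) 1) := setLIntegral_const _ _
      _ = ((⌊(n:ℝ)*δ⌋₊ + 2 : ℕ)) * W := by rw [Real.volume_Ico]; norm_num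
  rcases eq_or_lt_of_le hδ with h0 | hpos
  · have : I = 0 := by
      rw [hI]
      have : ∀ y, h y = 0 := by
        intro y; simp only [hh, ← h0, add_zero, sub_self, abs_zero, ENNReal.ofReal_zero]
      simp [lintegral_congr this]
    rw [this]; exact zero_le
  by_cases hWtop : W = ⊤
  · rw [hWtop, ENNReal.mul_top (by simpa using hpos)]
    exact le_top
  have main2 : ∀ n : ℕ, (n : ℝ≥0∞) * I ≤ (n : ℝ≥0∞) * (ENNReal.ofReal δ * W) + 2 * W := by
    intro n
    refine (main n).trans ?_
    have h1 : ((⌊(n:ℝ)*δ⌋₊ + 2 : ℕ) : ℝ≥0∞) ≤ (n : ℝ≥0∞) * ENNReal.ofReal δ + 2 := by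
      push_cast
      have h2 : ((⌊(n:ℝ)*δ⌋₊ : ℕ) : ℝ≥0∞) ≤ (n : ℝ≥0∞) * ENNReal.ofReal δ := by
        rw [← ENNReal.ofReal_natCast, ← ENNReal.ofReal_natCast n, ← ENNReal.ofReal_mul (by positivity)]
        exact ENNReal.ofReal_le_ofReal (Nat.floor_le (by positivity))
      exact add_le_add h2 le_rfl
    calc ((⌊(n:ℝ)*δ⌋₊ + 2 : ℕ) : ℝ≥0∞) * W ≤ ((n : ℝ≥0∞) * ENNReal.ofReal δ + 2) * W :=
          mul_le_mul_left h1 _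
      _ = (n : ℝ≥0∞) * (ENNReal.ofReal δ * W) + 2 * W := by ring
  refine ENNReal.le_of_forall_pos_le_add fun ε hε hfin => ?_
  have hWfin : 2 * W ≠ ⊤ := by
    simp [ENNReal.mul_eq_top, hWtop]
  obtain ⟨n, hn⟩ := ENNReal.exists_nat_gt
    (ENNReal.div_lt_top hWfin (by exact_mod_cast hε.ne' : (ε : ℝ≥0∞) ≠ 0)).ne
  have hn0 : (n : ℝ≥0∞) ≠ 0 := by
    intro hc
    rw [hc] at hn
    exact absurd hn (by simp)
  have hnt : (n : ℝ≥0∞) ≠ ⊤ := ENNReal.natCast_ne_top n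
  have hdivle : 2 * W / (n : ℝ≥0∞) ≤ (ε : ℝ≥0∞) := by
    rw [ENNReal.div_le_iff_le_mul (Or.inl hn0) (Or.inl hnt)]
    have h2 : 2 * W < (n : ℝ≥0∞) * (ε : ℝ≥0∞) := by
      rw [← ENNReal.div_lt_iff (Or.inl (by exact_mod_cast hε.ne')) (Or.inl ENNReal.coe_ne_top)]
      exact hn
    have h3 : 2 * W < (ε : ℝ≥0∞) * (n : ℝ≥0∞) := by
      rw [mul_comm ((ε : ℝ≥0∞)) ((n : ℝ≥0∞))]
      exact h2
    exact h3.le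
  have cancel : ∀ b : ℝ≥0∞, (n : ℝ≥0∞) * b / (n : ℝ≥0∞) = b := by
    intro b
    rw [mul_comm, mul_div_assoc, ENNReal.div_self hn0 hnt, mul_one]
  calc I = (n : ℝ≥0∞) * I / (n : ℝ≥0∞) := (cancel I).symm
    _ ≤ ((n : ℝ≥0∞) * (ENNReal.ofReal δ * W) + 2 * W) / (n : ℝ≥0∞) :=
        ENNReal.div_le_div_right (main2 n) _
    _ = (n : ℝ≥0∞) * (ENNReal.ofReal δ * W) / (n : ℝ≥0∞) + 2 * W / (n : ℝ≥0∞) :=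
        ENNReal.add_div
    _ = ENNReal.ofReal δ * W + 2 * W / (n : ℝ≥0∞) := by
        rw [cancel]
    _ ≤ ENNReal.ofReal δ * W + ε := add_le_add le_rfl hdivle

/-- Markov-type bound for the measure of points with a large increment. -/
theorem markov_bound {g : ℝ → ℝ} (hper : Function.Periodic g 1) (hgm : Measurable g)
    {δ : ℝ} (hδ : 0 ≤ δ) (c : ℝ) {η : ℝ} (hη : 0 < η) :
    volume {x ∈ Set.Ico (0:ℝ) 1 | η < |g (x + c + δ) - g (x + c)|} ≤
      ENNReal.ofReal δ * eVariationOn g (Set.Icc 0 1) / ENNReal.ofReal η := by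
  set h : ℝ → ℝ≥0∞ := fun y => ENNReal.ofReal |g (y+δ) - g y| with hh
  have hm : Measurable h :=
    (((hgm.comp (measurable_id.add_const δ)).sub hgm).abs).ennreal_ofReal
  have hp : ∀ y, h (y+1) = h y := by
    intro y
    simp only [hh]
    have e : y + 1 + δ = (y + δ) + 1 := by ring
    rw [e, hper (y + δ), hper y]
  have hη0 : (ENNReal.ofReal η) ≠ 0 := by simp [hη]
  have hmc : Measurable fun x => h (x + c) := hm.comp (measurable_id.add_const c)
  have hsub : {x ∈ Set.Ico (0:ℝ) 1 | η < |g (x + c + δ) - g (x + c)|}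
      ⊆ {x | ENNReal.ofReal η ≤ h (x + c)} ∩ Set.Ico 0 1 := by
    rintro x ⟨hx1, hx2⟩
    refine ⟨?_, hx1⟩
    simp only [Set.mem_setOf_eq, hh]
    exact ENNReal.ofReal_le_ofReal hx2.le
  have hmeas : MeasurableSet {x : ℝ | ENNReal.ofReal η ≤ h (x + c)} :=
    measurableSet_le measurable_const hmc
  calc volume {x ∈ Set.Ico (0:ℝ) 1 | η < |g (x + c + δ) - g (x + c)|}
      ≤ volume ({x | ENNReal.ofReal η ≤ h (x + c)} ∩ Set.Ico 0 1) := measure_mono hsub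
    _ = (volume.restrict (Set.Ico (0:ℝ) 1)) {x | ENNReal.ofReal η ≤ h (x + c)} :=
        (Measure.restrict_apply hmeas).symm
    _ ≤ (∫⁻ x, h (x + c) ∂(volume.restrict (Set.Ico (0:ℝ) 1))) / ENNReal.ofReal η :=
        meas_ge_le_lintegral_div hmc.aemeasurable hη0 ENNReal.ofReal_ne_top
    _ = (∫⁻ x in Set.Ico (0:ℝ) 1, h x) / ENNReal.ofReal η := by
        rw [lint_periodic_shift hm hp c]
    _ ≤ ENNReal.ofReal δ * eVariationOn g (Set.Icc 0 1) / ENNReal.ofReal η :=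
        ENNReal.div_le_div_right (key_integral hper hgm hδ) _

/-- Translating super-level sets of a periodic function preserves measure. -/
theorem levelset_shift {f : ℝ → ℝ} (hper : Function.Periodic f 1) (hfm : Measurable f)
    (R c : ℝ) :
    volume {x ∈ Set.Ico (0:ℝ) 1 | R < 1 + |f (x + c)|} =
      volume {y ∈ Set.Ico (0:ℝ) 1 | R < 1 + |f y|} := by
  set A : Set ℝ := {y | R < 1 + |f y|} with hA
  have hAm : MeasurableSet A := measurableSet_lt measurable_const (measurable_const.add hfm.abs)
  set h : ℝ → ℝ≥0∞ := A.indicator (1 : ℝ → ℝ≥0∞) with hh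
  have hm : Measurable h := measurable_one.indicator hAm
  have hp : ∀ y, h (y + 1) = h y := by
    intro y
    simp only [hh, Set.indicator_apply]
    have : y + 1 ∈ A ↔ y ∈ A := by simp only [hA, Set.mem_setOf_eq, hper y]
    simp only [Pi.one_apply]
    rw [if_congr this rfl rfl]
  have expand : ∀ c' : ℝ, ∫⁻ x in Set.Ico (0:ℝ) 1, h (x + c')
      = volume {x ∈ Set.Ico (0:ℝ) 1 | R < 1 + |f (x + c')|} := by
    intro c'
    have hpre : (fun x : ℝ => x + c') ⁻¹' A = {x : ℝ | R < 1 + |f (x + c')|} := rfl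
    have hps : MeasurableSet ((fun x : ℝ => x + c') ⁻¹' A) :=
      hAm.preimage (measurable_add_const c')
    have e1 : ∀ x : ℝ, h (x + c') = ((fun x : ℝ => x + c') ⁻¹' A).indicator (1 : ℝ → ℝ≥0∞) x := by
      intro x
      classical
      rw [Set.indicator_apply]
      simp only [hh, Set.indicator_apply, Set.mem_preimage, Pi.one_apply]
    rw [lintegral_congr e1, lintegral_indicator_one hps, Measure.restrict_apply hps]
    congr 1
    ext x
    simp only [hpre, Set.mem_inter_iff, Set.mem_setOf_eq, Set.mem_sep_iff]
    tauto
  calc volume {x ∈ Set.Ico (0:ℝ) 1 | R < 1 + |f (x + c)|}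
      = ∫⁻ x in Set.Ico (0:ℝ) 1, h (x + c) := (expand c).symm
    _ = ∫⁻ x in Set.Ico (0:ℝ) 1, h x := lint_periodic_shift hm hp c
    _ = ∫⁻ x in Set.Ico (0:ℝ) 1, h (x + 0) := by simp only [add_zero]
    _ = volume {x ∈ Set.Ico (0:ℝ) 1 | R < 1 + |f (x + 0)|} := expand 0
    _ = volume {y ∈ Set.Ico (0:ℝ) 1 | R < 1 + |f y|} := by simp only [add_zero]

/-- A periodic function with finite semi-bounded variation is measurable. -/
theorem measurable_of_sVar {f : ℝ → ℝ} (hper : Function.Periodic f 1) (hsv : sVar f ≠ ⊤) :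
    Measurable f := by
  have key : ∀ n : ℕ, Measurable (trunc f ((n:ℝ)+1)) := by
    intro n
    have hB : (1:ℝ) ≤ (n:ℝ)+1 := by
      have := Nat.cast_nonneg (α := ℝ) n
      linarith
    have hbv : BoundedVariationOn (trunc f ((n:ℝ)+1)) (Set.Icc 0 1) :=
      pVar_trunc_ne_top hsv hB
    obtain ⟨G, hGm, hGeq⟩ := exists_measurable_eqOn hbv
    have hperT : Function.Periodic (trunc f ((n:ℝ)+1)) 1 := trunc_periodic hper _
    have : trunc f ((n:ℝ)+1) = fun x => G (Int.fract x) := by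
      funext x
      have h1 : trunc f ((n:ℝ)+1) x = trunc f ((n:ℝ)+1) (Int.fract x) := by
        conv_lhs => rw [show x = Int.fract x + (⌊x⌋ : ℤ) by rw [Int.fract]; ring]
        rw [periodic_int_add hperT]
      rw [h1, hGeq ⟨Int.fract_nonneg x, (Int.fract_lt_one x).le⟩]
    rw [this]
    exact hGm.comp measurable_fract
  apply measurable_of_tendsto_metrizable key
  rw [tendsto_pi_nhds]
  intro x
  apply tendsto_atTop_of_eventually_const (i₀ := ⌈|f x|⌉₊)
  intro n hn
  have : |f x| ≤ (n:ℝ)+1 := by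
    have h1 : |f x| ≤ (⌈|f x|⌉₊ : ℝ) := Nat.le_ceil _
    have h2 : ((⌈|f x|⌉₊ : ℕ) : ℝ) ≤ (n:ℝ) := by exact_mod_cast hn
    linarith
  simp only [trunc, if_pos this]


/-- Measure bound for the union of large-increment sets. -/
theorem Cbad_bound {g : ℝ → ℝ} (hper : Function.Periodic g 1) (hgm : Measurable g)
    {δ : ℝ} (hδ : 0 ≤ δ) {η : ℝ} (hη : 0 < η) (q : ℕ) (c : ℤ → ℝ) :
    volume (⋃ s ∈ Finset.Icc (1:ℤ) (q:ℤ),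
        {x ∈ Set.Ico (0:ℝ) 1 | η < |g (x + c s + δ) - g (x + c s)|}) ≤
      (q : ℝ≥0∞) * (ENNReal.ofReal δ * eVariationOn g (Set.Icc 0 1) / ENNReal.ofReal η) := by
  calc volume (⋃ s ∈ Finset.Icc (1:ℤ) (q:ℤ),
        {x ∈ Set.Ico (0:ℝ) 1 | η < |g (x + c s + δ) - g (x + c s)|})
      ≤ ∑ s ∈ Finset.Icc (1:ℤ) (q:ℤ),
          volume {x ∈ Set.Ico (0:ℝ) 1 | η < |g (x + c s + δ) - g (x + c s)|} :=
        measure_biUnion_finset_le _ _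
    _ ≤ ∑ _s ∈ Finset.Icc (1:ℤ) (q:ℤ),
          (ENNReal.ofReal δ * eVariationOn g (Set.Icc 0 1) / ENNReal.ofReal η) :=
        Finset.sum_le_sum fun s _ => markov_bound hper hgm hδ (c s) hη
    _ = ((Finset.Icc (1:ℤ) (q:ℤ)).card : ℝ≥0∞) *
          (ENNReal.ofReal δ * eVariationOn g (Set.Icc 0 1) / ENNReal.ofReal η) := by
        rw [Finset.sum_const, nsmul_eq_mul]
    _ ≤ (q : ℝ≥0∞) * (ENNReal.ofReal δ * eVariationOn g (Set.Icc 0 1) / ENNReal.ofReal η) := by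
        apply mul_le_mul_left
        have : (Finset.Icc (1:ℤ) (q:ℤ)).card = q := by
          rw [Int.card_Icc]
          omega
        rw [this]

/-- Measure bound for the union of sets where `1+|f|` is large along the orbit. -/
theorem Ebad_bound {f : ℝ → ℝ} (hper : Function.Periodic f 1) (hfm : Measurable f)
    {ε : ℝ} (hε : 0 < ε) (α : ℝ) {q : ℕ} (hq : 1 ≤ q) :
    volume (⋃ s ∈ Finset.Icc (-(2*(q:ℤ))) (2*(q:ℤ)),
        {x ∈ Set.Ico (0:ℝ) 1 | Real.exp (ε*(q:ℝ)/10) < 1 + |f (x + (s:ℝ) * α)|}) ≤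
      ENNReal.ofReal (50/ε) *
        ∫⁻ x in {y ∈ Set.Ico (0:ℝ) 1 | Real.exp (ε*(q:ℝ)/10) < 1 + |f y|},
          ENNReal.ofReal (Real.log (1 + |f x|)) := by
  set S := {y ∈ Set.Ico (0:ℝ) 1 | Real.exp (ε*(q:ℝ)/10) < 1 + |f y|} with hS
  set I := ∫⁻ x in S, ENNReal.ofReal (Real.log (1 + |f x|)) with hI
  have hq' : (1:ℝ) ≤ (q:ℝ) := by exact_mod_cast hq
  have hSm : MeasurableSet S := by
    have : S = Set.Ico (0:ℝ) 1 ∩ {y | Real.exp (ε*(q:ℝ)/10) < 1 + |f y|} := by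
      ext y; simp only [hS, Set.mem_inter_iff, Set.mem_setOf_eq, Set.mem_sep_iff]
    rw [this]
    exact measurableSet_Ico.inter (measurableSet_lt measurable_const (measurable_const.add hfm.abs))
  have hc : (0:ℝ) < ε*(q:ℝ)/10 := by positivity
  -- Markov for the base set
  have hMarkov : ENNReal.ofReal (ε*(q:ℝ)/10) * volume S ≤ I := by
    have hpt : ∀ y ∈ S, ENNReal.ofReal (ε*(q:ℝ)/10) ≤ ENNReal.ofReal (Real.log (1 + |f y|)) := by
      intro y hy
      apply ENNReal.ofReal_le_ofReal
      have h1 : Real.exp (ε*(q:ℝ)/10) < 1 + |f y| := hy.2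
      have h2 := Real.log_lt_log (Real.exp_pos _) h1
      rw [Real.log_exp] at h2
      exact h2.le
    calc ENNReal.ofReal (ε*(q:ℝ)/10) * volume S
        = ∫⁻ _ in S, ENNReal.ofReal (ε*(q:ℝ)/10) := (setLIntegral_const _ _).symm
      _ ≤ I := setLIntegral_mono ((measurable_const.add hfm.abs).log.ennreal_ofReal) hpt
  have hvol : volume S ≤ (ENNReal.ofReal (ε*(q:ℝ)/10))⁻¹ * I := by
    have h0 : ENNReal.ofReal (ε*(q:ℝ)/10) ≠ 0 := by simp [hc]
    have ht : ENNReal.ofReal (ε*(q:ℝ)/10) ≠ ⊤ := ENNReal.ofReal_ne_top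
    calc volume S = (ENNReal.ofReal (ε*(q:ℝ)/10))⁻¹ * (ENNReal.ofReal (ε*(q:ℝ)/10) * volume S) := by
          rw [← mul_assoc, ENNReal.inv_mul_cancel h0 ht, one_mul]
      _ ≤ (ENNReal.ofReal (ε*(q:ℝ)/10))⁻¹ * I := mul_le_mul_right hMarkov _
  have hcard : ((Finset.Icc (-(2*(q:ℤ))) (2*(q:ℤ))).card : ℝ≥0∞) = ((4*q+1 : ℕ) : ℝ≥0∞) := by
    congr 1
    rw [Int.card_Icc]
    omega
  calc volume (⋃ s ∈ Finset.Icc (-(2*(q:ℤ))) (2*(q:ℤ)),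
        {x ∈ Set.Ico (0:ℝ) 1 | Real.exp (ε*(q:ℝ)/10) < 1 + |f (x + (s:ℝ) * α)|})
      ≤ ∑ s ∈ Finset.Icc (-(2*(q:ℤ))) (2*(q:ℤ)),
          volume {x ∈ Set.Ico (0:ℝ) 1 | Real.exp (ε*(q:ℝ)/10) < 1 + |f (x + (s:ℝ) * α)|} :=
        measure_biUnion_finset_le _ _
    _ = ∑ _s ∈ Finset.Icc (-(2*(q:ℤ))) (2*(q:ℤ)), volume S :=
        Finset.sum_congr rfl fun s _ => levelset_shift hper hfm _ _
    _ = ((Finset.Icc (-(2*(q:ℤ))) (2*(q:ℤ))).card : ℝ≥0∞) * volume S := by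
        rw [Finset.sum_const, nsmul_eq_mul]
    _ ≤ ((4*q+1 : ℕ) : ℝ≥0∞) * ((ENNReal.ofReal (ε*(q:ℝ)/10))⁻¹ * I) := by
        rw [hcard]; exact mul_le_mul_right hvol _
    _ ≤ ENNReal.ofReal (50/ε) * I := by
        rw [← mul_assoc]
        apply mul_le_mul_left
        have e1 : ((4*q+1 : ℕ) : ℝ≥0∞) = ENNReal.ofReal ((4*q+1 : ℕ) : ℝ) := by
          rw [ENNReal.ofReal_natCast]
        have e2 : (ENNReal.ofReal (ε*(q:ℝ)/10))⁻¹ = ENNReal.ofReal ((ε*(q:ℝ)/10)⁻¹) := by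
          rw [← ENNReal.ofReal_inv_of_pos hc]
        rw [e1, e2, ← ENNReal.ofReal_mul (by positivity)]
        apply ENNReal.ofReal_le_ofReal
        rw [div_eq_mul_inv 50 ε]
        have hεq : (0:ℝ) < ε * (q:ℝ) := by positivity
        have key : ((4*q+1 : ℕ) : ℝ) * (ε*(q:ℝ)/10)⁻¹ = (40*(q:ℝ)+10) / (ε*(q:ℝ)) := by
          push_cast
          field_simp
          ring
        rw [key]
        rw [div_le_iff₀ hεq]
        have : (50:ℝ) * ε⁻¹ * (ε * (q:ℝ)) = 50 * (q:ℝ) := by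
          field_simp
        rw [this]
        linarith
end Key

/-- `V` has `β`-repetitions along the sequence `{q n}`. -/
def betaRep (V : ℤ → ℂ) (β : ℝ) (q : ℕ → ℕ) : Prop :=
  ∃ N : ℕ, ∀ n ≥ N, ∀ s : ℤ, 1 ≤ s → s < (q n : ℤ) →
    ‖V s - V (s + (q n : ℤ))‖ ≤ Real.exp (-β * q n) ∧
    ‖V s - V (s - (q n : ℤ))‖ ≤ Real.exp (-β * q n)

/-- (Repetitions for potentials of semi-bounded variation.) Let `α` be
irrational with continued-fraction denominators `q_k`, let `f` be `1`-periodic with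
`𝒱(f) < ∞` and `log(1+|f|) ∈ L¹[0,1)`, let `ε > 0` and `β > 0`, and let `q_{n_j}` be a
subsequence of denominators with `Σ_j ∫_{{1+|f| > e^{ε q_{n_j}/10}}} log(1+|f|) < ∞` and
`q_{n_j+1} ≥ e^{β q_{n_j}}`. Then for a full-measure set of `x ∈ [0,1)` the potential
`V(m) = f(x + mα)` has `(β−ε)`-repetitions along `{q_{n_j}}`. -/
theorem schrodinger_beta_repetitions (α : ℝ) (hα : Irrational α) (f : ℝ → ℝ)
    (hper : Function.Periodic f 1) (hsv : sVar f ≠ ⊤)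
    (hlog : IntegrableOn (fun x => Real.log (1 + |f x|)) (Set.Ico 0 1) volume)
    (ε β : ℝ) (hε : 0 < ε) (hβ : 0 < β) (nj : ℕ → ℕ) (hmono : StrictMono nj)
    (hsum : ∑' j : ℕ,
        ∫⁻ x in {y ∈ Set.Ico (0:ℝ) 1 | Real.exp (ε * cfDen α (nj j) / 10) < 1 + |f y|},
          ENNReal.ofReal (Real.log (1 + |f x|)) < ⊤)
    (hgap : ∀ j : ℕ, Real.exp (β * cfDen α (nj j)) ≤ cfDen α (nj j + 1)) :
    ∃ X : Set ℝ, X ⊆ Set.Ico 0 1 ∧ volume (Set.Ico (0:ℝ) 1 \ X) = 0 ∧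
      ∀ x ∈ X, betaRep (fun m : ℤ => (f (x + m * α) : ℂ)) (β - ε)
        (fun j => cfDen α (nj j)) := by
  classical
  have hfm : Measurable f := measurable_of_sVar hper hsv
  set q : ℕ → ℕ := fun j => cfDen α (nj j) with hqdef
  have hq1 : ∀ j, 1 ≤ q j := fun j => cfDen_pos hα (nj j)
  have hq1R : ∀ j, (1:ℝ) ≤ (q j : ℝ) := fun j => by exact_mod_cast hq1 j
  have hqjR : ∀ j : ℕ, (j:ℝ) ≤ (q j : ℝ) := by
    intro j
    have h1 : j ≤ nj j := hmono.le_apply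
    have h2 : nj j ≤ cfDen α (nj j) := cfDen_ge hα (nj j)
    exact_mod_cast le_trans h1 h2
  have happrox : ∀ j : ℕ, ∃ m : ℤ, |(q j : ℝ) * α - m| ≤ Real.exp (-(β * (q j : ℝ))) := by
    intro j
    obtain ⟨m, hm⟩ := cf_approx hα (nj j)
    refine ⟨m, hm.trans ?_⟩
    have hg := hgap j
    rw [Real.exp_neg, one_div]
    exact inv_anti₀ (Real.exp_pos _) hg
  choose m hmle using happrox
  set δ' : ℕ → ℝ := fun j => (q j : ℝ) * α - m j with hδ'def
  set δv : ℕ → ℝ := fun j => |δ' j| with hδvdef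
  set B : ℕ → ℝ := fun j => Real.exp (ε * (q j : ℝ) / 10) with hBdef
  set g : ℕ → ℝ → ℝ := fun j => trunc f (B j) with hgdef
  set ηv : ℕ → ℝ := fun j => Real.exp (-(β - ε) * (q j : ℝ)) with hηdef
  set c₁ : ℕ → ℤ → ℝ := fun j s => (s:ℝ) * α + min (δ' j) 0 with hc1def
  set c₂ : ℕ → ℤ → ℝ := fun j s => (s:ℝ) * α - max (δ' j) 0 with hc2def
  have hδv0 : ∀ j, 0 ≤ δv j := fun j => abs_nonneg _
  have hB1 : ∀ j, 1 ≤ B j := by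
    intro j
    rw [hBdef]
    refine Real.one_le_exp ?_
    have := hq1R j
    positivity
  have hgper : ∀ j, Function.Periodic (g j) 1 := fun j => trunc_periodic hper (B j)
  have hgme : ∀ j, Measurable (g j) := by
    intro j
    rw [hgdef]
    exact Measurable.ite (measurableSet_le hfm.abs measurable_const) hfm measurable_const
  have hηpos : ∀ j, 0 < ηv j := fun j => Real.exp_pos _
  -- the bad sets
  set Ebad : ℕ → Set ℝ := fun j => ⋃ s ∈ Finset.Icc (-(2*(q j : ℤ))) (2*(q j : ℤ)),
      {x ∈ Set.Ico (0:ℝ) 1 | Real.exp (ε*(q j:ℝ)/10) < 1 + |f (x + (s:ℝ) * α)|} with hEdef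
  set C1 : ℕ → Set ℝ := fun j => ⋃ s ∈ Finset.Icc (1:ℤ) (q j : ℤ),
      {x ∈ Set.Ico (0:ℝ) 1 | ηv j < |g j (x + c₁ j s + δv j) - g j (x + c₁ j s)|} with hC1def
  set C2 : ℕ → Set ℝ := fun j => ⋃ s ∈ Finset.Icc (1:ℤ) (q j : ℤ),
      {x ∈ Set.Ico (0:ℝ) 1 | ηv j < |g j (x + c₂ j s + δv j) - g j (x + c₂ j s)|} with hC2def
  set bad : ℕ → Set ℝ := fun j => Ebad j ∪ (C1 j ∪ C2 j) with hbaddef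
  -- measure bound for the C-part
  set r : ℝ := Real.exp (-(ε/2)) with hrdef
  have hr0 : 0 ≤ r := (Real.exp_pos _).le
  have hr1 : r < 1 := Real.exp_lt_one_iff.mpr (by linarith)
  have hCb : ∀ j, volume (C1 j ∪ C2 j) ≤
      sVar f * ENNReal.ofReal ((8/ε) * r ^ j) := by
    intro j
    have h1 := Cbad_bound (hgper j) (hgme j) (hδv0 j) (hηpos j) (q j) (c₁ j)
    have h2 := Cbad_bound (hgper j) (hgme j) (hδv0 j) (hηpos j) (q j) (c₂ j)
    set D : ℝ≥0∞ := (q j : ℝ≥0∞) *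
      (ENNReal.ofReal (δv j) * eVariationOn (g j) (Set.Icc 0 1) / ENNReal.ofReal (ηv j)) with hD
    have hunion : volume (C1 j ∪ C2 j) ≤ D + D := by
      refine (measure_union_le _ _).trans ?_
      exact add_le_add h1 h2
    have hDle : D ≤ sVar f * ENNReal.ofReal ((q j:ℝ) *
        (Real.exp (-(β * (q j:ℝ))) * (B j * Real.exp ((β - ε) * (q j:ℝ))))) := by
      have hinv : (ENNReal.ofReal (ηv j))⁻¹ = ENNReal.ofReal (Real.exp ((β - ε) * (q j:ℝ))) := by
        rw [← ENNReal.ofReal_inv_of_pos (hηpos j)]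
        congr 1
        rw [hηdef]
        rw [← Real.exp_neg]
        congr 1
        ring
      have hWle : eVariationOn (g j) (Set.Icc 0 1) ≤ sVar f * ENNReal.ofReal (B j) :=
        pVar_trunc_le (hB1 j)
      have hδle' : ENNReal.ofReal (δv j) ≤ ENNReal.ofReal (Real.exp (-(β * (q j:ℝ)))) :=
        ENNReal.ofReal_le_ofReal (hmle j)
      calc D = (q j : ℝ≥0∞) * (ENNReal.ofReal (δv j) * eVariationOn (g j) (Set.Icc 0 1) *
            (ENNReal.ofReal (ηv j))⁻¹) := by rw [hD, div_eq_mul_inv]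
        _ ≤ (q j : ℝ≥0∞) * (ENNReal.ofReal (Real.exp (-(β * (q j:ℝ)))) *
            (sVar f * ENNReal.ofReal (B j)) * ENNReal.ofReal (Real.exp ((β - ε) * (q j:ℝ)))) := by
            rw [hinv]
            exact mul_le_mul_right (mul_le_mul_left (mul_le_mul hδle' hWle zero_le zero_le) _) _
        _ = sVar f * ((q j : ℝ≥0∞) * (ENNReal.ofReal (Real.exp (-(β * (q j:ℝ)))) *
            (ENNReal.ofReal (B j) * ENNReal.ofReal (Real.exp ((β - ε) * (q j:ℝ)))))) := by ring
        _ = sVar f * ENNReal.ofReal ((q j:ℝ) *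
            (Real.exp (-(β * (q j:ℝ))) * (B j * Real.exp ((β - ε) * (q j:ℝ))))) := by
            congr 1
            rw [ENNReal.ofReal_mul (by positivity), ENNReal.ofReal_mul (by positivity),
              ENNReal.ofReal_mul (by positivity), ENNReal.ofReal_natCast]
    have hreal : (q j:ℝ) * (Real.exp (-(β * (q j:ℝ))) * (B j * Real.exp ((β - ε) * (q j:ℝ))))
        ≤ (4/ε) * r ^ j := by
      set Q : ℝ := (q j : ℝ) with hQ
      have hQ1 : (1:ℝ) ≤ Q := hq1R j
      have hQj : (j:ℝ) ≤ Q := hqjR j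
      have e1 : Real.exp (-(β * Q)) * (B j * Real.exp ((β - ε) * Q))
          = Real.exp (-(9/10*ε) * Q) := by
        rw [hBdef]
        rw [← Real.exp_add, ← Real.exp_add]
        congr 1
        ring
      rw [e1]
      have step1 : Q ≤ (4/ε) * Real.exp ((ε/4) * Q) := by
        have h := Real.add_one_le_exp ((ε/4) * Q)
        have h2 : (ε/4) * Q ≤ Real.exp ((ε/4) * Q) := by linarith
        have h3 : (4/ε) * ((ε/4) * Q) = Q := by field_simp
        have h4 : (0:ℝ) ≤ 4/ε := by positivity
        have h5 := mul_le_mul_of_nonneg_left h2 h4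
        linarith
      have step2 : Real.exp ((ε/4) * Q) * Real.exp (-(9/10*ε) * Q) ≤ r ^ j := by
        rw [← Real.exp_add, hrdef, ← Real.exp_nat_mul]
        apply Real.exp_le_exp.mpr
        have : (j:ℝ) * -(ε/2) = -(ε/2) * (j:ℝ) := by ring
        rw [this]
        nlinarith
      calc Q * Real.exp (-(9/10*ε) * Q)
          ≤ ((4/ε) * Real.exp ((ε/4) * Q)) * Real.exp (-(9/10*ε) * Q) :=
            mul_le_mul_of_nonneg_right step1 (Real.exp_pos _).le
        _ = (4/ε) * (Real.exp ((ε/4) * Q) * Real.exp (-(9/10*ε) * Q)) := by ring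
        _ ≤ (4/ε) * (r ^ j) := mul_le_mul_of_nonneg_left step2 (by positivity)
    calc volume (C1 j ∪ C2 j) ≤ D + D := hunion
      _ = 2 * D := by ring
      _ ≤ 2 * (sVar f * ENNReal.ofReal ((4/ε) * r ^ j)) := by
          apply mul_le_mul_right
          exact hDle.trans (mul_le_mul_right (ENNReal.ofReal_le_ofReal hreal) _)
      _ = sVar f * (2 * ENNReal.ofReal ((4/ε) * r ^ j)) := by ring
      _ = sVar f * ENNReal.ofReal ((8/ε) * r ^ j) := by
          congr 1
          rw [← ENNReal.ofReal_ofNat, ← ENNReal.ofReal_mul (by norm_num)]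
          congr 1
          ring
  -- measure bound for the E-part
  have hEb : ∀ j, volume (Ebad j) ≤ ENNReal.ofReal (50/ε) *
      ∫⁻ x in {y ∈ Set.Ico (0:ℝ) 1 | Real.exp (ε * (q j : ℝ) / 10) < 1 + |f y|},
        ENNReal.ofReal (Real.log (1 + |f x|)) := by
    intro j
    exact Ebad_bound hper hfm hε α (hq1 j)
  -- summability
  have hsum1 : ∑' j, volume (Ebad j) ≠ ⊤ := by
    have hle := ENNReal.tsum_le_tsum hEb
    rw [ENNReal.tsum_mul_left] at hle
    refine ne_top_of_le_ne_top ?_ hle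
    exact ENNReal.mul_ne_top ENNReal.ofReal_ne_top hsum.ne
  have hsum2 : ∑' j, volume (C1 j ∪ C2 j) ≠ ⊤ := by
    have hle := ENNReal.tsum_le_tsum hCb
    rw [ENNReal.tsum_mul_left] at hle
    refine ne_top_of_le_ne_top (ENNReal.mul_ne_top hsv ?_) hle
    have hsummable : Summable (fun j : ℕ => (8/ε) * r ^ j) :=
      (summable_geometric_of_lt_one hr0 hr1).mul_left _
    rw [← ENNReal.ofReal_tsum_of_nonneg (fun j => by positivity) hsummable]
    exact ENNReal.ofReal_ne_top
  have hbadsum : ∑' j, volume (bad j) ≠ ⊤ := by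
    have hb : ∀ j, volume (bad j) ≤ volume (Ebad j) + volume (C1 j ∪ C2 j) :=
      fun j => measure_union_le _ _
    have hle := ENNReal.tsum_le_tsum hb
    rw [ENNReal.tsum_add] at hle
    exact ne_top_of_le_ne_top (ENNReal.add_ne_top.2 ⟨hsum1, hsum2⟩) hle
  have hlim : volume (limsup bad atTop) = 0 := measure_limsup_atTop_eq_zero hbadsum
  refine ⟨Set.Ico 0 1 \ limsup bad atTop, Set.diff_subset, ?_, ?_⟩
  · refine measure_mono_null ?_ hlim
    intro x hx
    simp only [Set.mem_diff] at hx
    by_contra hxl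
    exact hx.2 ⟨hx.1, hxl⟩
  · rintro x ⟨hxI, hxL⟩
    have hev : ∃ N, ∀ j ≥ N, x ∉ bad j := by
      by_contra hcon
      push_neg at hcon
      apply hxL
      rw [Filter.limsup_eq_iInf_iSup_of_nat]
      simp only [Set.iInf_eq_iInter, Set.iSup_eq_iUnion, Set.mem_iInter, Set.mem_iUnion]
      intro n
      obtain ⟨j, hj1, hj2⟩ := hcon n
      exact ⟨j, hj1, hj2⟩
    obtain ⟨N, hN⟩ := hev
    refine ⟨N, fun n hn s hs1 hs2 => ?_⟩
    have hnotbad := hN n hn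
    rw [hbaddef] at hnotbad
    simp only [Set.mem_union, not_or] at hnotbad
    obtain ⟨hnE, hnC1, hnC2⟩ := hnotbad
    have hqn1 : (1:ℤ) ≤ (q n : ℤ) := by exact_mod_cast hq1 n
    -- E-condition
    have hfb : ∀ t : ℤ, -(2*(q n:ℤ)) ≤ t → t ≤ 2*(q n:ℤ) →
        1 + |f (x + (t:ℝ)*α)| ≤ B n := by
      intro t h1 h2
      by_contra hlt
      push_neg at hlt
      apply hnE
      rw [hEdef]
      simp only [Set.mem_iUnion]
      refine ⟨t, Finset.mem_Icc.mpr ⟨h1, h2⟩, hxI, ?_⟩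
      rw [hBdef] at hlt
      exact hlt
    have htr : ∀ t : ℤ, -(2*(q n:ℤ)) ≤ t → t ≤ 2*(q n:ℤ) →
        g n (x + (t:ℝ)*α) = f (x + (t:ℝ)*α) := by
      intro t h1 h2
      have h3 := hfb t h1 h2
      have habs : |f (x + (t:ℝ)*α)| ≤ B n := by linarith
      rw [hgdef]
      simp only [trunc, if_pos habs]
    -- C-conditions
    have hC1' : ∀ t : ℤ, 1 ≤ t → t ≤ (q n : ℤ) →
        |g n (x + c₁ n t + δv n) - g n (x + c₁ n t)| ≤ ηv n := by
      intro t h1 h2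
      by_contra hlt
      push_neg at hlt
      apply hnC1
      rw [hC1def]
      simp only [Set.mem_iUnion]
      exact ⟨t, Finset.mem_Icc.mpr ⟨h1, h2⟩, hxI, hlt⟩
    have hC2' : ∀ t : ℤ, 1 ≤ t → t ≤ (q n : ℤ) →
        |g n (x + c₂ n t + δv n) - g n (x + c₂ n t)| ≤ ηv n := by
      intro t h1 h2
      by_contra hlt
      push_neg at hlt
      apply hnC2
      rw [hC2def]
      simp only [Set.mem_iUnion]
      exact ⟨t, Finset.mem_Icc.mpr ⟨h1, h2⟩, hxI, hlt⟩
    -- ranges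
    have hrs : -(2*(q n:ℤ)) ≤ s ∧ s ≤ 2*(q n:ℤ) := by omega
    have hrsp : -(2*(q n:ℤ)) ≤ s + (q n:ℤ) ∧ s + (q n:ℤ) ≤ 2*(q n:ℤ) := by omega
    have hrsm : -(2*(q n:ℤ)) ≤ s - (q n:ℤ) ∧ s - (q n:ℤ) ≤ 2*(q n:ℤ) := by omega
    -- point identities
    have gplus : g n (x + ((s + (q n:ℤ) : ℤ):ℝ) * α) = g n (x + (s:ℝ)*α + δ' n) := by
      have e : x + ((s + (q n:ℤ) : ℤ):ℝ) * α = (x + (s:ℝ)*α + δ' n) + (m n : ℝ) := by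
        rw [hδ'def]
        push_cast
        ring
      rw [e]
      exact periodic_int_add (hgper n) (m n) _
    have gminus : g n (x + ((s - (q n:ℤ) : ℤ):ℝ) * α) = g n (x + (s:ℝ)*α - δ' n) := by
      have e : x + ((s - (q n:ℤ) : ℤ):ℝ) * α = (x + (s:ℝ)*α - δ' n) + ((-(m n) : ℤ) : ℝ) := by
        rw [hδ'def]
        push_cast
        ring
      rw [e]
      exact periodic_int_add (hgper n) (-(m n)) _
    -- the two estimates on the truncated function
    have hkey1 : |g n (x + (s:ℝ)*α + δ' n) - g n (x + (s:ℝ)*α)| ≤ ηv n := by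
      rcases le_or_gt 0 (δ' n) with hpos | hneg
      · have hc1e : c₁ n s = (s:ℝ)*α := by rw [hc1def]; simp [min_eq_right hpos]
        have hδe : δv n = δ' n := abs_of_nonneg hpos
        have h := hC1' s hs1 hs2.le
        rw [hc1e, hδe] at h
        exact h
      · have hc2e : c₂ n s = (s:ℝ)*α := by
          rw [hc2def]; simp [max_eq_right hneg.le]
        have hδe : δv n = -δ' n := abs_of_neg hneg
        have hc1e : c₁ n s = (s:ℝ)*α + δ' n := by
          rw [hc1def]; simp [min_eq_left hneg.le]
        have h := hC1' s hs1 hs2.le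
        rw [hc1e, hδe] at h
        have e : x + ((s:ℝ)*α + δ' n) + -δ' n = x + (s:ℝ)*α := by ring
        have e2 : x + ((s:ℝ)*α + δ' n) = x + (s:ℝ)*α + δ' n := by ring
        rw [e, e2] at h
        rw [abs_sub_comm]
        exact h
    have hkey2 : |g n (x + (s:ℝ)*α - δ' n) - g n (x + (s:ℝ)*α)| ≤ ηv n := by
      rcases le_or_gt 0 (δ' n) with hpos | hneg
      · have hc2e : c₂ n s = (s:ℝ)*α - δ' n := by
          rw [hc2def]; simp [max_eq_left hpos]
        have hδe : δv n = δ' n := abs_of_nonneg hpos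
        have h := hC2' s hs1 hs2.le
        rw [hc2e, hδe] at h
        have e : x + ((s:ℝ)*α - δ' n) + δ' n = x + (s:ℝ)*α := by ring
        have e2 : x + ((s:ℝ)*α - δ' n) = x + (s:ℝ)*α - δ' n := by ring
        rw [e, e2] at h
        rw [abs_sub_comm]
        exact h
      · have hc2e : c₂ n s = (s:ℝ)*α := by
          rw [hc2def]; simp [max_eq_right hneg.le]
        have hδe : δv n = -δ' n := abs_of_neg hneg
        have h := hC2' s hs1 hs2.le
        rw [hc2e, hδe] at h
        have e : x + (s:ℝ)*α + -δ' n = x + (s:ℝ)*α - δ' n := by ring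
        rw [e] at h
        exact h
    -- conclude
    have hηgoal : ηv n = Real.exp (-(β - ε) * ((q n : ℕ) : ℝ)) := by rw [hηdef]
    constructor
    · show ‖((f (x + (s:ℝ) * α) : ℂ)) - ((f (x + ((s + (q n:ℤ) : ℤ):ℝ) * α) : ℂ))‖ ≤
        Real.exp (-(β - ε) * ((q n : ℕ) : ℝ))
      rw [← Complex.ofReal_sub, Complex.norm_real, Real.norm_eq_abs]
      have e1 : f (x + (s:ℝ)*α) = g n (x + (s:ℝ)*α) := (htr s hrs.1 hrs.2).symm
      have e2 : f (x + ((s + (q n:ℤ) : ℤ):ℝ) * α) = g n (x + (s:ℝ)*α + δ' n) := by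
        rw [← htr (s + (q n:ℤ)) hrsp.1 hrsp.2, gplus]
      rw [e1, e2, ← hηgoal, abs_sub_comm]
      exact hkey1
    · show ‖((f (x + (s:ℝ) * α) : ℂ)) - ((f (x + ((s - (q n:ℤ) : ℤ):ℝ) * α) : ℂ))‖ ≤
        Real.exp (-(β - ε) * ((q n : ℕ) : ℝ))
      rw [← Complex.ofReal_sub, Complex.norm_real, Real.norm_eq_abs]
      have e1 : f (x + (s:ℝ)*α) = g n (x + (s:ℝ)*α) := (htr s hrs.1 hrs.2).symm
      have e2 : f (x + ((s - (q n:ℤ) : ℤ):ℝ) * α) = g n (x + (s:ℝ)*α - δ' n) := by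
        rw [← htr (s - (q n:ℤ)) hrsm.1 hrsm.2, gminus]
      rw [e1, e2, ← hηgoal, abs_sub_comm]
      exact hkey2
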